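/- arXiv:1904.08871 — 2 statements merged into one kernel-verified Lean document; each statement's English description precedes it below -/
import Mathlib

section
/- Let λ = 1/2, let ω = (√5−1)/2, and let E ∈ ℝ with |E| ≤ 2.5. Let N ≥ 1, P = 2001², and 0 < ε < 1. Then ℙ(|Q_N(P) − L_N(1/2,E)| > ε×10⁻²) ≤ 1/(300ε²), where the probability is with respect to the i.i.d. uniform sample points. -/
/-!
Every transfer matrix has determinant one, which forces `1 ≤ ‖M_N‖`, while
`‖A_j‖ ≤ |E| + 2λ + 1 ≤ 4.5`. Hence `u_N` takes values in `[0, log 4.5] ⊆ [0, 2]`, so each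
sample has variance at most `1`, and Chebyshev's inequality for the mean of `P` independent samples
bounds the probability by `10⁴ / (P ε²) ≤ 1 / (300 ε²)`.
-/

open scoped Matrix.Norms.L2Operator

noncomputable section

/-- Skew-shift potential `v_n(x,y) = 2 cos(2π(n(n−1)/2·ω + n·y + x))`. -/
def skewV (ω : ℝ) (n : ℤ) (x y : ℝ) : ℝ :=
  2 * Real.cos (2 * Real.pi * ((n * (n - 1) : ℝ) / 2 * ω + (n : ℝ) * y + x))

/-- One-step transfer matrix `A_j`. -/
def Amat (lam E ω : ℝ) (j : ℤ) (x y : ℝ) : Matrix (Fin 2) (Fin 2) ℝ :=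
  !![E - lam * skewV ω j x y, -1; 1, 0]

/-- n-step transfer matrix `M_n = A_n ⋯ A_1`. -/
def Mmat (lam E ω : ℝ) : ℕ → ℝ → ℝ → Matrix (Fin 2) (Fin 2) ℝ
  | 0, _, _ => 1
  | (n+1), x, y => Amat lam E ω (n + 1 : ℕ) x y * Mmat lam E ω n x y

/-- The unit square `[0,1]²`. -/
def unitSq : Set (ℝ × ℝ) := Set.Icc (0:ℝ) 1 ×ˢ Set.Icc (0:ℝ) 1

/-- Non-averaged finite-size Lyapunov exponent `u_n(x,y)`. -/
def uFS (lam E ω : ℝ) (n : ℕ) (x y : ℝ) : ℝ :=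
  (1 / n : ℝ) * Real.log ‖Mmat lam E ω n x y‖

/-- Finite-size Lyapunov exponent `L_n(λ,E)`. -/
def LFS (lam E ω : ℝ) (n : ℕ) : ℝ :=
  (1 / n : ℝ) * ∫ p in unitSq, Real.log ‖Mmat lam E ω n p.1 p.2‖

open MeasureTheory ProbabilityTheory

namespace Matrix

lemma l2_opNorm_fin_two_le {A : Matrix (Fin 2) (Fin 2) ℝ} {C : ℝ} (hC : 0 ≤ C)
    (h : ∀ u v : ℝ, (A 0 0 * u + A 0 1 * v) ^ 2 + (A 1 0 * u + A 1 1 * v) ^ 2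
      ≤ C ^ 2 * (u ^ 2 + v ^ 2)) : ‖A‖ ≤ C := by
  rw [← l2_opNorm_toEuclideanCLM]
  refine ContinuousLinearMap.opNorm_le_bound _ hC fun x => ?_
  refine (sq_le_sq₀ (norm_nonneg _) (by positivity)).mp ?_
  simpa [EuclideanSpace.norm_sq_eq, Fin.sum_univ_two, mulVec, dotProduct, mul_pow]
    using h (x 0) (x 1)

lemma sq_add_sq_le_l2_opNorm_sq (A : Matrix (Fin 2) (Fin 2) ℝ) (j : Fin 2) :
    A 0 j ^ 2 + A 1 j ^ 2 ≤ ‖A‖ ^ 2 := by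
  have h := l2_opNorm_mulVec A (EuclideanSpace.single j 1)
  rw [PiLp.norm_single, norm_one, mul_one] at h
  have hcol := pow_le_pow_left₀ (norm_nonneg _) h 2
  simpa [EuclideanSpace.norm_sq_eq, Fin.sum_univ_two, mulVec, dotProduct,
    EuclideanSpace.single, Pi.single_apply] using hcol

lemma abs_det_le_l2_opNorm_sq (A : Matrix (Fin 2) (Fin 2) ℝ) : |A.det| ≤ ‖A‖ ^ 2 := by
  refine abs_le_of_sq_le_sq ?_ (by positivity)
  have h0 := sq_add_sq_le_l2_opNorm_sq A 0
  have h1 := sq_add_sq_le_l2_opNorm_sq A 1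
  -- Lagrange's identity: `(a² + c²)(b² + d²) = (ad - bc)² + (ab + cd)²`
  calc A.det ^ 2 ≤ (A 0 0 ^ 2 + A 1 0 ^ 2) * (A 0 1 ^ 2 + A 1 1 ^ 2) := by
        rw [det_fin_two]; nlinarith [sq_nonneg (A 0 0 * A 0 1 + A 1 0 * A 1 1)]
    _ ≤ (‖A‖ ^ 2) ^ 2 := by rw [sq (‖A‖ ^ 2)]; gcongr

lemma l2_opNorm_companion_le (a : ℝ) : ‖!![a, -1; 1, 0]‖ ≤ |a| + 1 :=
  l2_opNorm_fin_two_le (by positivity) fun u v => by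
    simp only [of_apply, cons_val', cons_val_zero, cons_val_one, empty_val',
      cons_val_fin_one]
    rcases abs_cases a with ⟨ha, -⟩ | ⟨ha, -⟩ <;> rw [ha] <;>
      nlinarith [mul_nonneg (abs_nonneg a) (sq_nonneg (u + v)),
        mul_nonneg (abs_nonneg a) (sq_nonneg (u - v)), sq_nonneg (a * v)]

end Matrix

lemma abs_skewV_le (ω : ℝ) (n : ℤ) (x y : ℝ) : |skewV ω n x y| ≤ 2 := by
  rw [skewV, abs_mul, abs_two]
  linarith [Real.abs_cos_le_one (2 * Real.pi * ((n * (n - 1) : ℝ) / 2 * ω + n * y + x))]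

lemma norm_Amat_le (lam E ω : ℝ) (j : ℤ) (x y : ℝ) :
    ‖Amat lam E ω j x y‖ ≤ |E| + 2 * |lam| + 1 := by
  have hv : |lam * skewV ω j x y| ≤ 2 * |lam| := by
    rw [abs_mul, mul_comm]
    exact mul_le_mul_of_nonneg_right (abs_skewV_le ω j x y) (abs_nonneg lam)
  calc ‖Amat lam E ω j x y‖ ≤ |E - lam * skewV ω j x y| + 1 :=
        Matrix.l2_opNorm_companion_le _
    _ ≤ |E| + 2 * |lam| + 1 := by linarith [abs_sub E (lam * skewV ω j x y)]

lemma norm_Mmat_le (lam E ω : ℝ) (n : ℕ) (x y : ℝ) :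
    ‖Mmat lam E ω n x y‖ ≤ (|E| + 2 * |lam| + 1) ^ n := by
  induction n with
  | zero => simp [Mmat]
  | succ n ih =>
    calc ‖Mmat lam E ω (n + 1) x y‖
        ≤ ‖Amat lam E ω (n + 1 : ℕ) x y‖ * ‖Mmat lam E ω n x y‖ := Matrix.l2_opNorm_mul _ _
      _ ≤ (|E| + 2 * |lam| + 1) * (|E| + 2 * |lam| + 1) ^ n := by
        gcongr
        exact norm_Amat_le lam E ω _ x y
      _ = (|E| + 2 * |lam| + 1) ^ (n + 1) := by ring

lemma det_Mmat (lam E ω : ℝ) (n : ℕ) (x y : ℝ) : (Mmat lam E ω n x y).det = 1 := by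
  induction n with
  | zero => simp [Mmat]
  | succ n ih => rw [Mmat, Matrix.det_mul, ih, mul_one, Amat, Matrix.det_fin_two_of]; ring

lemma one_le_norm_Mmat (lam E ω : ℝ) (n : ℕ) (x y : ℝ) : 1 ≤ ‖Mmat lam E ω n x y‖ := by
  have h := Matrix.abs_det_le_l2_opNorm_sq (Mmat lam E ω n x y)
  rw [det_Mmat, abs_one] at h
  nlinarith [norm_nonneg (Mmat lam E ω n x y)]

lemma uFS_mem_Icc (lam E ω : ℝ) (n : ℕ) (x y : ℝ) :
    uFS lam E ω n x y ∈ Set.Icc 0 (Real.log (|E| + 2 * |lam| + 1)) := by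
  have hM := one_le_norm_Mmat lam E ω n x y
  have hK : 0 ≤ Real.log (|E| + 2 * |lam| + 1) :=
    Real.log_nonneg (by linarith [abs_nonneg E, abs_nonneg lam])
  have hlog : Real.log ‖Mmat lam E ω n x y‖ ≤ n * Real.log (|E| + 2 * |lam| + 1) := by
    rw [← Real.log_pow]
    exact Real.log_le_log (by linarith) (norm_Mmat_le lam E ω n x y)
  rw [uFS, one_div]
  refine ⟨mul_nonneg (by positivity) (Real.log_nonneg hM), ?_⟩
  rcases n.eq_zero_or_pos with rfl | hn
  · simpa using hK
  · rw [inv_mul_le_iff₀ (by exact_mod_cast hn)]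
    exact hlog

lemma continuous_Mmat (lam E ω : ℝ) (n : ℕ) :
    Continuous fun p : ℝ × ℝ => Mmat lam E ω n p.1 p.2 := by
  induction n with
  | zero => exact continuous_const
  | succ n ih =>
    have hA : Continuous fun p : ℝ × ℝ => Amat lam E ω (n + 1 : ℕ) p.1 p.2 := by
      refine continuous_matrix fun i j => ?_
      fin_cases i <;> fin_cases j <;> simp [Amat, skewV] <;> fun_prop
    exact hA.matrix_mul ih

lemma measurable_uFS (lam E ω : ℝ) (n : ℕ) :
    Measurable fun p : ℝ × ℝ => uFS lam E ω n p.1 p.2 :=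
  ((Real.measurable_log.comp (continuous_norm.comp (continuous_Mmat lam E ω n)).measurable)
    ).const_mul _

lemma LFS_eq_integral_uFS (lam E ω : ℝ) (n : ℕ) :
    LFS lam E ω n = ∫ p in unitSq, uFS lam E ω n p.1 p.2 := by
  rw [LFS, ← integral_const_mul]
  rfl

section Chebyshev

variable {ι Ω : Type*} [Fintype ι] [Nonempty ι] [MeasurableSpace Ω] {μ : Measure Ω}
  [IsProbabilityMeasure μ]

lemma meas_le_abs_average_sub_le {X : ι → Ω → ℝ} (hX : ∀ i, AEMeasurable (X i) μ)
    (hindep : Pairwise fun i j => IndepFun (X i) (X j) μ) {a b m : ℝ}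
    (hbdd : ∀ i, ∀ᵐ w ∂μ, X i w ∈ Set.Icc a b) (hmean : ∀ i, μ[X i] = m) {t : ℝ} (ht : 0 < t) :
    μ {w | t ≤ |(1 / Fintype.card ι : ℝ) * ∑ i, X i w - m|}
      ≤ ENNReal.ofReal ((b - a) ^ 2 / (4 * Fintype.card ι * t ^ 2)) := by
  have hn : (0 : ℝ) < Fintype.card ι := by positivity
  have hL2 : ∀ i, MemLp (X i) 2 μ := fun i =>
    memLp_of_bounded (hbdd i) (hX i).aestronglyMeasurable 2
  set Y : Ω → ℝ := fun w => (1 / Fintype.card ι : ℝ) * ∑ i, X i w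
  have hY : MemLp Y 2 μ := (memLp_finsetSum _ fun i _ => hL2 i).const_mul _
  have hY_mean : μ[Y] = m := by
    simp only [Y, integral_const_mul, integral_finsetSum _ fun i _ => (hL2 i).integrable one_le_two,
      hmean, Finset.sum_const, Finset.card_univ, nsmul_eq_mul]
    field_simp
  have hY_var : variance Y μ ≤ (b - a) ^ 2 / (4 * Fintype.card ι) := by
    calc variance Y μ = (1 / Fintype.card ι : ℝ) ^ 2 * ∑ i, variance (X i) μ := by
          rw [variance_const_mul, ← Finset.sum_fn, IndepFun.variance_sum (fun i _ => hL2 i)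
            fun i _ j _ hij => hindep hij]
      _ ≤ (1 / Fintype.card ι : ℝ) ^ 2 * ∑ _i : ι, ((b - a) / 2) ^ 2 := by
          gcongr with i
          exact variance_le_sq_of_bounded (hbdd i) (hX i)
      _ = (b - a) ^ 2 / (4 * Fintype.card ι) := by
          rw [Finset.sum_const, Finset.card_univ, nsmul_eq_mul]
          field_simp
          ring
  calc μ {w | t ≤ |Y w - m|} ≤ ENNReal.ofReal (variance Y μ / t ^ 2) := by
        simpa only [hY_mean] using meas_ge_le_variance_div_sq hY ht
    _ ≤ ENNReal.ofReal ((b - a) ^ 2 / (4 * Fintype.card ι * t ^ 2)) := by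
        rw [← div_div]
        gcongr

lemma meas_le_abs_monteCarlo_sub_integral_le {α : Type*} [MeasurableSpace α] {ν : Measure α}
    {Z : ι → Ω → α} (hZ : ∀ i, AEMeasurable (Z i) μ) (hindep : iIndepFun Z μ)
    (hlaw : ∀ i, μ.map (Z i) = ν) {f : α → ℝ} (hf : Measurable f) {a b : ℝ}
    (hfab : ∀ p, f p ∈ Set.Icc a b) {t : ℝ} (ht : 0 < t) :
    μ {w | t ≤ |(1 / Fintype.card ι : ℝ) * ∑ i, f (Z i w) - ∫ p, f p ∂ν|}
      ≤ ENNReal.ofReal ((b - a) ^ 2 / (4 * Fintype.card ι * t ^ 2)) := by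
  refine meas_le_abs_average_sub_le (X := fun i => f ∘ Z i) (fun i => hf.comp_aemeasurable (hZ i))
    (fun i j hij => (hindep.comp (fun _ => f) fun _ => hf).indepFun hij)
    (fun i => ae_of_all _ fun w => hfab _) (fun i => ?_) ht
  rw [← hlaw i, integral_map (hZ i) hf.aestronglyMeasurable]
  rfl

end Chebyshev

lemma log_four_point_five_le_two : Real.log 4.5 ≤ 2 := by
  rw [Real.log_le_iff_le_exp (by norm_num), show (2 : ℝ) = 1 + 1 by norm_num, Real.exp_add]
  nlinarith [Real.exp_one_gt_d9]

theorem monte_carlo_bound_general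
    (E : ℝ) (hE : |E| ≤ 2.5) (N : ℕ)
    (ε : ℝ) (hε0 : 0 < ε)
    {Ω : Type*} [MeasurableSpace Ω] (μ : MeasureTheory.Measure Ω)
    [MeasureTheory.IsProbabilityMeasure μ]
    (Z : Fin (2001^2) → Ω → ℝ × ℝ)
    (hmeas : ∀ i, Measurable (Z i))
    (hindep : ProbabilityTheory.iIndepFun Z μ)
    (hunif : ∀ i, MeasureTheory.Measure.map (Z i) μ
        = MeasureTheory.volume.restrict unitSq) :
    μ {w | |(1 / (2001^2 : ℝ)) *
            (∑ i : Fin (2001^2),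
              uFS (1/2) E ((Real.sqrt 5 - 1)/2) N (Z i w).1 (Z i w).2)
          - LFS (1/2) E ((Real.sqrt 5 - 1)/2) N| > ε * 10^(-2 : ℤ)}
      ≤ ENNReal.ofReal (1 / (300 * ε^2)) := by
  have hu : ∀ p : ℝ × ℝ, uFS (1/2) E ((Real.sqrt 5 - 1)/2) N p.1 p.2 ∈ Set.Icc 0 2 := by
    intro p
    obtain ⟨h0, h1⟩ := uFS_mem_Icc (1/2) E ((Real.sqrt 5 - 1)/2) N p.1 p.2
    refine ⟨h0, h1.trans <| (Real.log_le_log (by positivity) ?_).trans log_four_point_five_le_two⟩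
    rw [abs_of_pos (by norm_num : (0 : ℝ) < 1 / 2)]
    linarith
  have hMC := meas_le_abs_monteCarlo_sub_integral_le (fun i => (hmeas i).aemeasurable) hindep
    hunif (measurable_uFS _ _ _ N) hu (t := ε * 10 ^ (-2 : ℤ)) (by positivity)
  rw [← LFS_eq_integral_uFS, Fintype.card_fin, Nat.cast_pow, Nat.cast_ofNat] at hMC
  refine (measure_mono ?_).trans (hMC.trans (ENNReal.ofReal_le_ofReal ?_))
  · exact Set.ofPred_subset_ofPred.mpr fun _ => le_of_lt
  · rw [div_le_div_iff₀ (by positivity) (by positivity)]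
    norm_num
    nlinarith [sq_nonneg ε]

/-- **Monte-Carlo error bound** (Lemma 3.2).  For `λ = 1/2`, `ω = (√5−1)/2`,
`|E| ≤ 2.5`, `N ≥ 1`, `P = 2001²` and `0 < ε < 1`, the Monte-Carlo estimator
`Q_N(P) = (1/P)·Σ_{i=1}^P u_N(x_i,y_i)` built from i.i.d. points uniformly
distributed on `[0,1]²` satisfies
`ℙ(|Q_N(P) − L_N(1/2,E)| > ε·10⁻²) ≤ 1/(300 ε²)`. -/
theorem monte_carlo_bound
    (E : ℝ) (hE : |E| ≤ 2.5) (N : ℕ) (hN : 1 ≤ N)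
    (ε : ℝ) (hε0 : 0 < ε) (hε1 : ε < 1)
    {Ω : Type*} [MeasurableSpace Ω] (μ : MeasureTheory.Measure Ω)
    [MeasureTheory.IsProbabilityMeasure μ]
    (Z : Fin (2001^2) → Ω → ℝ × ℝ)
    (hmeas : ∀ i, Measurable (Z i))
    (hindep : ProbabilityTheory.iIndepFun Z μ)
    (hunif : ∀ i, MeasureTheory.Measure.map (Z i) μ
        = MeasureTheory.volume.restrict unitSq) :
    μ {w | |(1 / (2001^2 : ℝ)) *
            (∑ i : Fin (2001^2),
              uFS (1/2) E ((Real.sqrt 5 - 1)/2) N (Z i w).1 (Z i w).2)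
          - LFS (1/2) E ((Real.sqrt 5 - 1)/2) N| > ε * 10^(-2 : ℤ)}
      ≤ ENNReal.ofReal (1 / (300 * ε^2)) :=
  monte_carlo_bound_general E hE N ε hε0 μ Z hmeas hindep hunif

end
end

section
/- For every real number a, the operator norm of the 2×2 real matrix [[a, −1], [1, 0]] equals √(2 + a² + |a|·√(4 + a²)) / √2. -/
/-!
`‖A v‖² = v ⬝ᵥ (Aᵀ A) v`, so `‖A‖²` is the largest value of the quadratic form of the Gram matrix
`Aᵀ A = !![p, q; q, r]` on the unit circle, namely its larger eigenvalue `μ`. Since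
`(μ - p) (μ - r) = q²` with both factors nonnegative, `μ (x² + y²) - (p x² + 2 q x y + r y²)` is a
perfect square up to the factor `μ - p`, and it vanishes on an eigenvector. For `A = !![a, -1; 1, 0]`
the Gram matrix is `!![a² + 1, -a; -a, 1]`, whose larger eigenvalue is
`(2 + a² + |a| √(4 + a²)) / 2`.
-/

open scoped Matrix Matrix.Norms.L2Operator

section

variable {𝕜 𝕜₂ E F : Type*} [SeminormedAddCommGroup E] [SeminormedAddCommGroup F]
  [NontriviallyNormedField 𝕜] [NontriviallyNormedField 𝕜₂] [NormedSpace 𝕜 E] [NormedSpace 𝕜₂ F]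
  {σ₁₂ : 𝕜 →+* 𝕜₂} [RingHomIsometric σ₁₂]

theorem ContinuousLinearMap.opNorm_eq_sqrt_of_sq_bound_attained {f : E →SL[σ₁₂] F} {μ : ℝ}
    (hbound : ∀ x, ‖f x‖ ^ 2 ≤ μ * ‖x‖ ^ 2) {v : E} (hv : ‖v‖ ≠ 0)
    (hfv : ‖f v‖ ^ 2 = μ * ‖v‖ ^ 2) : ‖f‖ = √μ := by
  refine le_antisymm (f.opNorm_le_bound (Real.sqrt_nonneg μ) fun x ↦ ?_) ?_
  · rw [← Real.sqrt_sq (norm_nonneg (f x)), ← Real.sqrt_sq (norm_nonneg x),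
      ← Real.sqrt_mul' _ (sq_nonneg _)]
    exact Real.sqrt_le_sqrt (hbound x)
  · have hμ : μ * ‖v‖ ^ 2 ≤ ‖f‖ ^ 2 * ‖v‖ ^ 2 := by
      rw [← hfv, ← mul_pow]
      gcongr
      exact f.le_opNorm v
    rw [← Real.sqrt_sq f.opNorm_nonneg]
    exact Real.sqrt_le_sqrt (le_of_mul_le_mul_right hμ (by positivity))

end

/-- The larger eigenvalue of the symmetric matrix `!![p, q; q, r]`. -/
noncomputable def largerEigenvalue (p q r : ℝ) : ℝ :=
  (p + r + √((p - r) ^ 2 + 4 * q ^ 2)) / 2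

section largerEigenvalue

variable (p q r : ℝ)

private lemma abs_sub_le_sqrt_discrim : |p - r| ≤ √((p - r) ^ 2 + 4 * q ^ 2) :=
  Real.abs_le_sqrt (by nlinarith [sq_nonneg q])

lemma left_le_largerEigenvalue : p ≤ largerEigenvalue p q r := by
  have := abs_sub_le_sqrt_discrim p q r
  unfold largerEigenvalue
  linarith [le_abs_self (p - r)]

lemma right_le_largerEigenvalue : r ≤ largerEigenvalue p q r := by
  have := abs_sub_le_sqrt_discrim p q r
  unfold largerEigenvalue
  linarith [neg_abs_le (p - r)]

lemma sub_mul_sub_largerEigenvalue :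
    (largerEigenvalue p q r - p) * (largerEigenvalue p q r - r) = q ^ 2 := by
  unfold largerEigenvalue
  linear_combination (1 / 4) * Real.sq_sqrt (by positivity : 0 ≤ (p - r) ^ 2 + 4 * q ^ 2)

lemma quadratic_le_largerEigenvalue (x y : ℝ) :
    p * x ^ 2 + 2 * q * x * y + r * y ^ 2 ≤ largerEigenvalue p q r * (x ^ 2 + y ^ 2) := by
  have hp := left_le_largerEigenvalue p q r
  have hr := right_le_largerEigenvalue p q r
  have hpr := sub_mul_sub_largerEigenvalue p q r
  set μ := largerEigenvalue p q r
  rcases hp.eq_or_lt with hp | hp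
  · have hq : q = 0 := by rwa [← hp, sub_self, zero_mul, eq_comm, sq_eq_zero_iff] at hpr
    subst hq
    nlinarith
  · -- `(μ - p)` times the gap is `((μ - p) x - q y) ^ 2`
    nlinarith [sq_nonneg ((μ - p) * x - q * y)]

lemma exists_quadratic_eq_largerEigenvalue : ∃ x y : ℝ, x ^ 2 + y ^ 2 ≠ 0 ∧
    p * x ^ 2 + 2 * q * x * y + r * y ^ 2 = largerEigenvalue p q r * (x ^ 2 + y ^ 2) := by
  have hpr := sub_mul_sub_largerEigenvalue p q r
  set μ := largerEigenvalue p q r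
  rcases eq_or_ne μ p with hp | hp
  · exact ⟨1, 0, by norm_num, by rw [hp]; ring⟩
  · refine ⟨q, μ - p, by positivity, ?_⟩
    linear_combination -(μ - p) * hpr

end largerEigenvalue

namespace Matrix

lemma norm_toEuclideanCLM_sq {n : Type*} [Fintype n] [DecidableEq n] (A : Matrix n n ℝ)
    (v : EuclideanSpace ℝ n) : ‖toEuclideanCLM (𝕜 := ℝ) A v‖ ^ 2 = v ⬝ᵥ (Aᵀ * A) *ᵥ v := by
  rw [← real_inner_self_eq_norm_sq, inner_toEuclideanCLM, ofLp_toEuclideanCLM, ← mulVec_mulVec,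
    dotProduct_mulVec _ Aᵀ, vecMul_transpose]

lemma norm_toEuclideanCLM_fin_two_sq (A : Matrix (Fin 2) (Fin 2) ℝ)
    (v : EuclideanSpace ℝ (Fin 2)) : ‖toEuclideanCLM (𝕜 := ℝ) A v‖ ^ 2 =
      (Aᵀ * A) 0 0 * v 0 ^ 2 + 2 * (Aᵀ * A) 0 1 * v 0 * v 1 + (Aᵀ * A) 1 1 * v 1 ^ 2 := by
  rw [norm_toEuclideanCLM_sq]
  simp only [dotProduct, mulVec, mul_apply, transpose_apply, Fin.sum_univ_two]
  ring

lemma l2_opNorm_fin_two (A : Matrix (Fin 2) (Fin 2) ℝ) :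
    ‖A‖ = √(largerEigenvalue ((Aᵀ * A) 0 0) ((Aᵀ * A) 0 1) ((Aᵀ * A) 1 1)) := by
  obtain ⟨x, y, hxy, hxy_eq⟩ :=
    exists_quadratic_eq_largerEigenvalue ((Aᵀ * A) 0 0) ((Aᵀ * A) 0 1) ((Aᵀ * A) 1 1)
  have norm_sq (v : EuclideanSpace ℝ (Fin 2)) : ‖v‖ ^ 2 = v 0 ^ 2 + v 1 ^ 2 := by
    simp [EuclideanSpace.real_norm_sq_eq, Fin.sum_univ_two]
  rw [cstar_norm_def]
  refine (toEuclideanCLM (𝕜 := ℝ) A).opNorm_eq_sqrt_of_sq_bound_attained (v := !₂[x, y])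
    (fun v ↦ ?_) ?_ ?_
  · rw [norm_toEuclideanCLM_fin_two_sq, norm_sq]
    exact quadratic_le_largerEigenvalue ..
  · simpa [← sq_eq_zero_iff (a := ‖_‖), norm_sq] using hxy
  · rw [norm_toEuclideanCLM_fin_two_sq, norm_sq]
    exact hxy_eq

end Matrix

/-- The Euclidean operator norm of the one-step transfer-type matrix
`[[a, −1], [1, 0]]` equals `√(2 + a² + |a|·√(4 + a²)) / √2`. -/
theorem opNorm_transfer_matrix (a : ℝ) :
    ‖(!![a, -1; 1, 0] : Matrix (Fin 2) (Fin 2) ℝ)‖ =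
      Real.sqrt (2 + a^2 + |a| * Real.sqrt (4 + a^2)) / Real.sqrt 2 := by
  have hgram : (!![a, -1; 1, 0]ᵀ * !![a, -1; 1, 0] : Matrix (Fin 2) (Fin 2) ℝ) =
      !![a ^ 2 + 1, -a; -a, 1] := by
    ext i j
    fin_cases i <;> fin_cases j <;> simp [Matrix.mul_apply, Fin.sum_univ_two, sq]
  have hdiscrim : √((a ^ 2 + 1 - 1) ^ 2 + 4 * (-a) ^ 2) = |a| * √(4 + a ^ 2) := by
    rw [← Real.sqrt_sq_eq_abs, ← Real.sqrt_mul (sq_nonneg a)]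
    ring_nf
  rw [Matrix.l2_opNorm_fin_two, hgram, largerEigenvalue, ← Real.sqrt_div' _ zero_le_two]
  simp only [Matrix.of_apply, Matrix.cons_val', Matrix.cons_val_zero, Matrix.cons_val_one,
    Matrix.empty_val', Matrix.cons_val_fin_one, hdiscrim]
  ring_nf
end
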